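/- Let H, W, m be positive integers. For every integer u with -H ≤ u ≤ H - 1 and every integer v with -W ≤ v ≤ W - 1, the nearest-neighbor up-sampling frequency response β_up(u,v) := Σ_{s=0}^{m-1} Σ_{t=0}^{m-1} exp(-2πi(us/(2mH) + vt/(2mW))) is nonzero. (Consequently, m-fold nearest-neighbor up-sampling rescales each spectral coefficient of the original image on its original frequency band by a nonzero factor, so no original spectral information is destroyed.) -/
import Mathlib

/-- The frequency response of `m`-fold nearest-neighbor up-sampling on the `2mH × 2mW` grid:
`β_up(u,v) = ∑_{s=0}^{m-1} ∑_{t=0}^{m-1} exp(-2πi(us/(2mH) + vt/(2mW)))`. -/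
noncomputable def betaUp (H W m : ℤ) (u v : ℤ) : ℂ :=
  ∑ s ∈ Finset.Icc (0 : ℤ) (m - 1), ∑ t ∈ Finset.Icc (0 : ℤ) (m - 1),
    Complex.exp (-(2 * (Real.pi : ℂ) * Complex.I) *
      ((u : ℂ) * (s : ℂ) / (2 * ((m * H : ℤ) : ℂ)) +
       (v : ℂ) * (t : ℂ) / (2 * ((m * W : ℤ) : ℂ))))

lemma betaUp_aux (m H u : ℤ) (hm : 0 < m) (hH : 0 < H) (h1 : -H ≤ u) (h2 : u ≤ H - 1) :
    ∑ s ∈ Finset.Icc (0 : ℤ) (m - 1),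
      Complex.exp (-(2 * (Real.pi : ℂ) * Complex.I) *
        ((u : ℂ) * (s : ℂ) / (2 * ((m * H : ℤ) : ℂ)))) ≠ 0 := by
  have hmH : ((m * H : ℤ) : ℂ) ≠ 0 := by
    exact_mod_cast (mul_pos hm hH).ne'
  have hH0 : (H : ℂ) ≠ 0 := by exact_mod_cast hH.ne'
  have hm0 : (m : ℂ) ≠ 0 := by exact_mod_cast hm.ne'
  set c : ℂ := -(2 * (Real.pi : ℂ) * Complex.I) * ((u : ℂ) / (2 * ((m * H : ℤ) : ℂ))) with hc
  have hterm : ∀ s : ℤ, -(2 * (Real.pi : ℂ) * Complex.I) *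
      ((u : ℂ) * (s : ℂ) / (2 * ((m * H : ℤ) : ℂ))) = (s : ℂ) * c := by
    intro s; rw [hc]; ring
  rw [Int.Icc_eq_finset_map, Finset.sum_map]
  have hrw : ∀ n : ℕ,
      Complex.exp (-(2 * (Real.pi : ℂ) * Complex.I) *
        ((u : ℂ) * (((Nat.castEmbedding.trans <| addLeftEmbedding (0:ℤ)) n : ℤ) : ℂ) /
          (2 * ((m * H : ℤ) : ℂ)))) = Complex.exp c ^ n := by
    intro n
    have he : ((Nat.castEmbedding.trans <| addLeftEmbedding (0:ℤ)) n : ℤ) = (n : ℤ) := by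
      simp [Nat.castEmbedding, addLeftEmbedding]
    rw [he, hterm, Int.cast_natCast, ← Complex.exp_nat_mul]
  simp only [hrw]
  set z : ℂ := Complex.exp c with hz
  have hN : (m - 1 + 1 - 0).toNat = m.toNat := by omega
  rw [hN]
  by_cases hz1 : z = 1
  · rw [hz1]
    simp only [one_pow, Finset.sum_const, Finset.card_range, nsmul_eq_mul, mul_one]
    have : (m.toNat : ℂ) ≠ 0 := by
      exact_mod_cast (by omega : m.toNat ≠ 0)
    exact this
  · rw [geom_sum_eq hz1]
    apply div_ne_zero _ (sub_ne_zero.mpr hz1)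
    rw [sub_ne_zero]
    intro hpow
    -- z ^ m.toNat = exp (m * c)
    have hzm : z ^ m.toNat = Complex.exp ((m.toNat : ℂ) * c) := by
      rw [hz, ← Complex.exp_nat_mul]
    have hmn : ((m.toNat : ℂ)) = (m : ℂ) := by
      exact_mod_cast Int.toNat_of_nonneg hm.le
    rw [hzm, hmn] at hpow
    rw [Complex.exp_eq_one_iff] at hpow
    obtain ⟨n, hn⟩ := hpow
    have htpi : (2 * (Real.pi : ℂ) * Complex.I) ≠ 0 := by
      simp [Real.pi_ne_zero, Complex.I_ne_zero]
    have hmc : (m : ℂ) * c = -(2 * (Real.pi : ℂ) * Complex.I) * ((u : ℂ) / (2 * (H : ℂ))) := by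
      rw [hc]
      have : ((m * H : ℤ) : ℂ) = (m : ℂ) * (H : ℂ) := by push_cast; ring
      rw [this]
      field_simp
    rw [hmc] at hn
    have hu : (u : ℂ) = -(n : ℂ) * (2 * (H : ℂ)) := by
      have h2H : (2 * (H : ℂ)) ≠ 0 := by
        simpa using hH0
      have h3 : (2 * (Real.pi : ℂ) * Complex.I) * (-((u : ℂ) / (2 * (H : ℂ)))) =
          (2 * (Real.pi : ℂ) * Complex.I) * (n : ℂ) := by
        linear_combination hn
      have h4 := mul_left_cancel₀ htpi h3
      field_simp at h4
      linear_combination -h4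
    have hu' : u = -n * (2 * H) := by exact_mod_cast hu
    have hn0 : n = 0 := by nlinarith [hu' ▸ h1, hu' ▸ h2]
    have hu0 : u = 0 := by subst hn0; simpa using hu'
    apply hz1
    rw [hz, hc, hu0]
    simp

/-- On the original frequency band `[-H, H-1] × [-W, W-1]`, the nearest-neighbor up-sampling
frequency response `β_up(u,v)` is nonzero; hence up-sampling destroys no original spectral
information. -/
theorem stmt_5 (H W m : ℤ) (hH : 0 < H) (hW : 0 < W) (hm : 0 < m) :
    ∀ u v : ℤ, -H ≤ u → u ≤ H - 1 → -W ≤ v → v ≤ W - 1 → betaUp H W m u v ≠ 0 := by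
  intro u v hu1 hu2 hv1 hv2
  unfold betaUp
  have hsplit : ∀ s t : ℤ,
      Complex.exp (-(2 * (Real.pi : ℂ) * Complex.I) *
        ((u : ℂ) * (s : ℂ) / (2 * ((m * H : ℤ) : ℂ)) +
         (v : ℂ) * (t : ℂ) / (2 * ((m * W : ℤ) : ℂ)))) =
      Complex.exp (-(2 * (Real.pi : ℂ) * Complex.I) *
        ((u : ℂ) * (s : ℂ) / (2 * ((m * H : ℤ) : ℂ)))) *
      Complex.exp (-(2 * (Real.pi : ℂ) * Complex.I) *
        ((v : ℂ) * (t : ℂ) / (2 * ((m * W : ℤ) : ℂ)))) := by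
    intro s t
    rw [← Complex.exp_add, mul_add]
  simp only [hsplit]
  rw [← Finset.sum_mul_sum]
  exact mul_ne_zero (betaUp_aux m H u hm hH hu1 hu2) (betaUp_aux m W v hm hW hv1 hv2)
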